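/- arXiv:math/0304281 — 3 statements merged into one kernel-verified Lean document; each statement's English description precedes it below -/
import Mathlib

section
/- Let F = [[0, Aᵀ],[A, ×(-iA)]] for A ∈ ℂ³ and let λ be a complex number with λ² = A·A (bilinear dot product). Then exp(F) = cosh(λ)·I + (sinh(λ)/λ)·F, where sinh(λ)/λ is interpreted as 1 when λ = 0. -/
open Matrix

noncomputable def Fmat (A : Fin 3 → ℂ) : Matrix (Fin 4) (Fin 4) ℂ :=
  !![0, A 0, A 1, A 2;
     A 0, 0, -Complex.I * A 2, Complex.I * A 1;
     A 1, Complex.I * A 2, 0, -Complex.I * A 0;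
     A 2, -Complex.I * A 1, Complex.I * A 0, 0]

noncomputable def cdot (A B : Fin 3 → ℂ) : ℂ := A 0 * B 0 + A 1 * B 1 + A 2 * B 2

/-!
Since `F² = λ² • 1`, the even powers of `F` are `λ^(2n) • 1` and the odd ones `λ^(2n) • F`.
Splitting the exponential series into even and odd terms therefore gives the cosh series
times `1` plus the series `∑ λ^(2n)/(2n+1)!` times `F`.
-/

section SquareScalar

variable {R 𝔸 : Type*} [CommSemiring R] [Semiring 𝔸] [Algebra R 𝔸] {x : 𝔸} {c : R}

theorem pow_two_mul_of_sq_eq_smul_one (h : x ^ 2 = c • 1) (n : ℕ) :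
    x ^ (2 * n) = c ^ n • 1 := by
  rw [pow_mul, h, smul_pow, one_pow]

theorem pow_two_mul_add_one_of_sq_eq_smul_one (h : x ^ 2 = c • 1) (n : ℕ) :
    x ^ (2 * n + 1) = c ^ n • x := by
  rw [pow_succ, pow_two_mul_of_sq_eq_smul_one h, smul_mul_assoc, one_mul]

end SquareScalar

theorem Complex.summable_pow_two_mul_div_factorial_two_mul_add_one (z : ℂ) :
    Summable fun n : ℕ => z ^ (2 * n) / ((2 * n + 1).factorial : ℂ) := by
  refine Summable.of_norm_bounded (Real.hasSum_cosh ‖z‖).summable fun n => ?_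
  rw [norm_div, norm_pow, Complex.norm_natCast]
  gcongr
  omega

theorem NormedSpace.exp_eq_cosh_smul_one_add_smul_of_sq_eq {𝔸 : Type*} [Ring 𝔸] [Algebra ℂ 𝔸]
    [TopologicalSpace 𝔸] [IsTopologicalRing 𝔸] [T2Space 𝔸] [ContinuousSMul ℂ 𝔸]
    {x : 𝔸} {l : ℂ} (h : x ^ 2 = l ^ 2 • 1) :
    NormedSpace.exp x =
      Complex.cosh l • 1 + (∑' n : ℕ, l ^ (2 * n) / ((2 * n + 1).factorial : ℂ)) • x := by
  rw [NormedSpace.exp_eq_tsum ℂ]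
  refine HasSum.tsum_eq (HasSum.even_add_odd ?_ ?_)
  · convert (Complex.hasSum_cosh l).smul_const (1 : 𝔸) using 2 with n
    rw [pow_two_mul_of_sq_eq_smul_one h, smul_smul, ← pow_mul, div_eq_mul_inv, mul_comm]
  · convert (Complex.summable_pow_two_mul_div_factorial_two_mul_add_one l).hasSum.smul_const x
      using 2 with n
    rw [pow_two_mul_add_one_of_sq_eq_smul_one h, smul_smul, ← pow_mul, div_eq_mul_inv, mul_comm]

theorem Fmat_sq (A : Fin 3 → ℂ) : Fmat A ^ 2 = cdot A A • (1 : Matrix (Fin 4) (Fin 4) ℂ) := by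
  ext i j
  fin_cases i <;> fin_cases j <;>
    simp [sq, Fmat, cdot, Matrix.mul_apply, Fin.sum_univ_four] <;> ring_nf <;> simp [Complex.I_sq]

/-- exp F = cosh(λ) I + (sinh λ / λ) F where λ² = A·A and sinh λ / λ is
the entire function ∑ λ^(2n)/(2n+1)!. -/
theorem stmt_8 (A : Fin 3 → ℂ) (l : ℂ) (hl : l ^ 2 = cdot A A) :
    NormedSpace.exp (Fmat A) =
      Complex.cosh l • (1 : Matrix (Fin 4) (Fin 4) ℂ) +
        (∑' n : ℕ, l ^ (2 * n) / ((2 * n + 1).factorial : ℂ)) • Fmat A :=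
  NormedSpace.exp_eq_cosh_smul_one_add_smul_of_sq_eq (by rw [hl, Fmat_sq])
end

section
/- Let a, b, α, β be complex scalars and F, G 4×4 complex matrices of the form F = [[0, Aᵀ],[A, ×(-iA)]], G = [[0, Bᵀ],[B, ×(-iB)]] for A, B ∈ ℂ³. Then (aI + bF)(αI + βG) = (aα + bβ(A·B))I + bαF + aβG + (bβ/2)[F,G], and this product is again of the form scalar·I plus a matrix in S. -/
open Matrix

noncomputable def crossI (A B : Fin 3 → ℂ) : Fin 3 → ℂ :=
  ![Complex.I * (A 1 * B 2 - A 2 * B 1),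
    Complex.I * (A 2 * B 0 - A 0 * B 2),
    Complex.I * (A 0 * B 1 - A 1 * B 0)]

set_option maxHeartbeats 1000000 in
lemma mulF (A B : Fin 3 → ℂ) :
    Fmat A * Fmat B = cdot A B • (1 : Matrix (Fin 4) (Fin 4) ℂ) + Fmat (crossI A B) := by
  ext i j
  fin_cases i <;> fin_cases j <;>
    simp [Fmat, cdot, crossI, Matrix.mul_apply, Fin.sum_univ_succ, Matrix.one_apply] <;>
    ring_nf <;> simp [Complex.I_sq] <;> ring

lemma Fmat_neg (u : Fin 3 → ℂ) : Fmat (fun i => -u i) = -Fmat u := by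
  ext i j; fin_cases i <;> fin_cases j <;> simp [Fmat] <;> ring

lemma crossI_anti (A B : Fin 3 → ℂ) : crossI B A = fun i => -crossI A B i := by
  funext i; fin_cases i <;> simp [crossI] <;> ring

set_option maxHeartbeats 1000000 in
lemma Fmat_comb (x y z : ℂ) (u v w : Fin 3 → ℂ) :
    Fmat (fun i => x * u i + y * v i + z * w i) = x • Fmat u + y • Fmat v + z • Fmat w := by
  ext i j
  fin_cases i <;> fin_cases j <;>
    simp [Fmat, Matrix.add_apply, Matrix.smul_apply] <;> ring

/-- Product formula in I + S, and closure of I + S under multiplication. -/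
theorem stmt_10 (a b α β : ℂ) (A B : Fin 3 → ℂ) :
    (a • (1 : Matrix (Fin 4) (Fin 4) ℂ) + b • Fmat A) *
        (α • (1 : Matrix (Fin 4) (Fin 4) ℂ) + β • Fmat B) =
      (a * α + b * β * cdot A B) • (1 : Matrix (Fin 4) (Fin 4) ℂ) +
        (b * α) • Fmat A + (a * β) • Fmat B +
        (b * β / 2) • (Fmat A * Fmat B - Fmat B * Fmat A) ∧
    ∃ (c : ℂ) (C : Fin 3 → ℂ),
      (a • (1 : Matrix (Fin 4) (Fin 4) ℂ) + b • Fmat A) *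
          (α • (1 : Matrix (Fin 4) (Fin 4) ℂ) + β • Fmat B) =
        c • (1 : Matrix (Fin 4) (Fin 4) ℂ) + Fmat C := by
  have hc : cdot B A = cdot A B := by simp [cdot]; ring
  have hx : Fmat (crossI B A) = -Fmat (crossI A B) := by
    rw [crossI_anti, Fmat_neg]
  have key :
      (a • (1 : Matrix (Fin 4) (Fin 4) ℂ) + b • Fmat A) *
          (α • (1 : Matrix (Fin 4) (Fin 4) ℂ) + β • Fmat B) =
        (a * α + b * β * cdot A B) • (1 : Matrix (Fin 4) (Fin 4) ℂ) +
          (b * α) • Fmat A + (a * β) • Fmat B + (b * β) • Fmat (crossI A B) := by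
    simp only [add_mul, mul_add, Matrix.smul_mul, Matrix.mul_smul, one_mul, mul_one,
      smul_smul, mulF A B]
    module
  constructor
  · rw [key, mulF A B, mulF B A, hc, hx]
    match_scalars <;> ring
  · refine ⟨a * α + b * β * cdot A B,
      fun i => (b * α) * A i + (a * β) * B i + (b * β) * crossI A B i, ?_⟩
    rw [key, Fmat_comb]
    abel
end

section
/- The modulus-squared map 𝔪(A) = conj(A)·A is multiplicative on I + S: for A, B ∈ I + S, 𝔪(AB) = 𝔪(A)𝔪(B), and 𝔪(A) is always a real matrix. -/
open Matrix

noncomputable def modSq (M : Matrix (Fin 4) (Fin 4) ℂ) : Matrix (Fin 4) (Fin 4) ℂ :=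
  M.map (starRingEnd ℂ) * M

set_option maxHeartbeats 1000000 in
lemma comm_conj (a b : ℂ) (A B : Fin 3 → ℂ) :
    (b • (1 : Matrix (Fin 4) (Fin 4) ℂ) + Fmat B).map (starRingEnd ℂ) *
      (a • (1 : Matrix (Fin 4) (Fin 4) ℂ) + Fmat A) =
    (a • (1 : Matrix (Fin 4) (Fin 4) ℂ) + Fmat A) *
      (b • (1 : Matrix (Fin 4) (Fin 4) ℂ) + Fmat B).map (starRingEnd ℂ) := by
  ext i j
  fin_cases i <;> fin_cases j <;>
    simp [Fmat, Matrix.mul_apply, Fin.sum_univ_four, Matrix.map_apply,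
      Matrix.add_apply, Matrix.smul_apply, Matrix.one_apply, _root_.map_mul,
      _root_.map_add, Complex.conj_I, smul_eq_mul] <;>
    ring_nf <;> rw [Complex.I_sq] <;> ring

/-- The modulus-squared map is multiplicative on I + S and lands in the real matrices. -/
theorem stmt_15 (a b : ℂ) (A B : Fin 3 → ℂ) :
    modSq ((a • (1 : Matrix (Fin 4) (Fin 4) ℂ) + Fmat A) *
        (b • (1 : Matrix (Fin 4) (Fin 4) ℂ) + Fmat B)) =
      modSq (a • (1 : Matrix (Fin 4) (Fin 4) ℂ) + Fmat A) *
        modSq (b • (1 : Matrix (Fin 4) (Fin 4) ℂ) + Fmat B) ∧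
    (modSq (a • (1 : Matrix (Fin 4) (Fin 4) ℂ) + Fmat A)).map (starRingEnd ℂ) =
      modSq (a • (1 : Matrix (Fin 4) (Fin 4) ℂ) + Fmat A) := by
  set M := a • (1 : Matrix (Fin 4) (Fin 4) ℂ) + Fmat A with hM
  set N := b • (1 : Matrix (Fin 4) (Fin 4) ℂ) + Fmat B with hN
  constructor
  · show (M * N).map (starRingEnd ℂ) * (M * N) = _
    rw [Matrix.map_mul, Matrix.mul_assoc, ← Matrix.mul_assoc (N.map (starRingEnd ℂ)),
      comm_conj a b A B, Matrix.mul_assoc, ← Matrix.mul_assoc]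
    rfl
  · show ((M.map (starRingEnd ℂ)) * M).map (starRingEnd ℂ) = _
    rw [Matrix.map_mul, Matrix.map_map]
    have : ((starRingEnd ℂ) : ℂ → ℂ) ∘ ((starRingEnd ℂ) : ℂ → ℂ) = id := by
      funext z; simp
    rw [this, Matrix.map_id, ← comm_conj a a A A]; rfl
end
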